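/- (Expansion-Containment with local feature size) Let 0 < λ < 1 and set β = (3+λ)(1+λ)/(1−λ)². For any two points x, y ∈ ℝᵈ, if C^λ(x, φ(x)) ∩ C^λ(y, φ(y)) ≠ ∅, then C^λ(y, φ(y)) ⊆ C^{βλ}(x, φ(x)). -/

import Mathlib

noncomputable section

open Metric Set MeasureTheory
open scoped InnerProductSpace Classical

variable {d n : ℕ}

/-- The capsule `C_s(x,r)` induced by a single segment `s = [a,b]` with unit
direction vector `v`.  If the nearest point of `s` to `x` is an endpoint, it is
the closed ball of radius `max r (dist x s)`; otherwise it is the intersection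
of the infinite closed cylinder of radius `max r (dist x s)` whose axis is the
line through `x` parallel to `v` with the closed ball of radius
`max r (min ‖x-a‖ ‖x-b‖)`. -/
def capsuleSeg (a b v x : EuclideanSpace ℝ (Fin d)) (r : ℝ) :
    Set (EuclideanSpace ℝ (Fin d)) :=
  if Metric.infDist x (segment ℝ a b) = min (dist x a) (dist x b) then
    Metric.closedBall x (max r (Metric.infDist x (segment ℝ a b)))
  else
    {y | ‖(y - x) - ⟪y - x, v⟫_ℝ • v‖ ≤ max r (Metric.infDist x (segment ℝ a b))} ∩
      Metric.closedBall x (max r (min (dist x a) (dist x b)))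

/-- The capsule `C(x,r)` of the family of segments `s i = [a i, b i]`. -/
def capsuleFam (a b v : Fin n → EuclideanSpace ℝ (Fin d))
    (x : EuclideanSpace ℝ (Fin d)) (r : ℝ) : Set (EuclideanSpace ℝ (Fin d)) :=
  ⋂ i, capsuleSeg (a i) (b i) (v i) x r

/-- Image of a set under the homothety (central scaling) centered at `x` with ratio `lam`. -/
def scaleAbout (x : EuclideanSpace ℝ (Fin d)) (lam : ℝ)
    (C : Set (EuclideanSpace ℝ (Fin d))) : Set (EuclideanSpace ℝ (Fin d)) :=
  (AffineMap.homothety x lam) '' C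

/-- Local feature size: the distance from `x` to its second-nearest segment. -/
def lfs (a b : Fin n → EuclideanSpace ℝ (Fin d)) (x : EuclideanSpace ℝ (Fin d)) : ℝ :=
  sInf {t | ∃ i j : Fin n, i < j ∧
    t = max (Metric.infDist x (segment ℝ (a i) (b i)))
            (Metric.infDist x (segment ℝ (a j) (b j)))}

/-- `D_i(x)`: half the squared distance from `x` to the segment `[a,b]`. -/
def Dseg (a b x : EuclideanSpace ℝ (Fin d)) : ℝ :=
  Metric.infDist x (segment ℝ a b) ^ 2 / 2

/-- `D•_i(x)`: half the squared distance from `x` to the nearest endpoint. -/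
def Dbullet (a b x : EuclideanSpace ℝ (Fin d)) : ℝ :=
  min (dist x a ^ 2) (dist x b ^ 2) / 2

/-- The quadratic form `w ↦ wᵀ H_i(x) w` of the local tensor
`H_i(x) = (1/D_i(x))(I - v vᵀ) + (1/D•_i(x)) v vᵀ`. -/
def tensorQ (a b v x w : EuclideanSpace ℝ (Fin d)) : ℝ :=
  (1 / Dseg a b x) * (‖w‖ ^ 2 - ⟪w, v⟫_ℝ ^ 2) + (1 / Dbullet a b x) * ⟪w, v⟫_ℝ ^ 2

/-- The local ellipsoid `E_i(x) = {y | ½ (y-x)ᵀ H_i(x) (y-x) ≤ 1}`. -/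
def localEllipsoid (a b v x : EuclideanSpace ℝ (Fin d)) :
    Set (EuclideanSpace ℝ (Fin d)) :=
  {y | tensorQ a b v x (y - x) / 2 ≤ 1}

/-- `Ê(x)`: the intersection of the local ellipsoids of all segments. -/
def hatE (a b v : Fin n → EuclideanSpace ℝ (Fin d)) (x : EuclideanSpace ℝ (Fin d)) :
    Set (EuclideanSpace ℝ (Fin d)) :=
  ⋂ i, localEllipsoid (a i) (b i) (v i) x

/-- `Ẽ(x)`: the ellipsoid of the blended tensor `H(x) = ∑ i, H_i(x)`. -/
def tildeE (a b v : Fin n → EuclideanSpace ℝ (Fin d)) (x : EuclideanSpace ℝ (Fin d)) :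
    Set (EuclideanSpace ℝ (Fin d)) :=
  {y | (∑ i, tensorQ (a i) (b i) (v i) x (y - x)) / 2 ≤ 1}

/-!
Segment by segment, a capsule is a cylinder intersected with a ball, with cylinder radius
`R_s(x) = max(φ(x), dist(x, s))` and ball radius `B_s(x) = max(φ(x), min(‖x - a‖, ‖x - b‖))`.
Through a common point `p` of the two `λ`-capsules, `‖z - x‖ ≤ 2λ B_s(y) + λ B_s(x)` for `z` in
the `λ`-capsule of `y`, and likewise for the component of `z - x` orthogonal to `s` with `R` in
place of `B`. Since `λ + 2λ(1 + 2λ)/(1 - λ) ≤ βλ`, it suffices to show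
`(1 - λ) R_s(y) ≤ (1 + 2λ) R_s(x)` and the same for `B`.

For `B` this follows from `B_s` being 1-Lipschitz and `‖y - x‖ ≤ λ B_s(y) + λ B_s(x)`. For `R`
the key estimate is `dist(y, s) ≤ (1 + 2λ) R_s(x) + λ R_s(y)`: if `y` projects into `s` it is
the cylinder bound through `p`; otherwise `B_s(y) = R_s(y)`, and every point of the `λ`-capsule
of `x` lies within `(1 + 2λ) R_s(x)` of `s`. Applied to the two segments realising `φ(x)`, the
same estimate bounds `(1 - λ) φ(y)` by `(1 + 2λ) φ(x)`.
-/

namespace Capsule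

section Perp

variable {E : Type*} [NormedAddCommGroup E] [InnerProductSpace ℝ E]

/-- For a unit vector `v`, the orthogonal projection onto `vᗮ`, in the form used by
`capsuleSeg`. -/
def perp (v : E) : E →ₗ[ℝ] E where
  toFun w := w - ⟪w, v⟫_ℝ • v
  map_add' u w := by simp only [inner_add_left, add_smul]; abel
  map_smul' c w := by simp only [real_inner_smul_left, smul_sub, smul_smul, RingHom.id_apply]

lemma perp_apply (v w : E) : perp v w = w - ⟪w, v⟫_ℝ • v := rfl

lemma perp_add_inner_smul (v w : E) : perp v w + ⟪w, v⟫_ℝ • v = w := sub_add_cancel _ _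

lemma sub_add_smul_eq_perp_add (v w a : E) (s : ℝ) :
    w - (a + s • v) = perp v (w - a) + (⟪w - a, v⟫_ℝ - s) • v := by
  rw [perp_apply, sub_smul]; abel

variable {v : E}

lemma perp_smul_self (hv : ‖v‖ = 1) (t : ℝ) : perp v (t • v) = 0 := by
  rw [perp_apply, real_inner_smul_left, real_inner_self_eq_norm_sq, hv, one_pow, mul_one,
    sub_self]

lemma norm_perp_add_smul_sq (hv : ‖v‖ = 1) (w : E) (t : ℝ) :
    ‖perp v w + t • v‖ ^ 2 = ‖perp v w‖ ^ 2 + t ^ 2 := by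
  have horth : ⟪perp v w, t • v⟫_ℝ = 0 := by
    rw [real_inner_smul_right, perp_apply, inner_sub_left, real_inner_smul_left,
      real_inner_self_eq_norm_sq, hv]
    ring
  rw [sq, sq, norm_add_sq_eq_norm_sq_add_norm_sq_real horth, norm_smul, hv, mul_one,
    Real.norm_eq_abs, abs_mul_abs_self, sq]

lemma norm_perp_le (hv : ‖v‖ = 1) (w : E) : ‖perp v w‖ ≤ ‖w‖ := by
  have h := norm_perp_add_smul_sq hv w ⟪w, v⟫_ℝ
  rw [perp_add_inner_smul] at h
  exact (sq_le_sq₀ (norm_nonneg _) (norm_nonneg _)).1 (by nlinarith)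

lemma abs_inner_le_norm_of_norm_eq_one (hv : ‖v‖ = 1) (w : E) : |⟪w, v⟫_ℝ| ≤ ‖w‖ := by
  simpa [hv] using abs_real_inner_le_norm w v

lemma norm_sub_add_smul_sq (hv : ‖v‖ = 1) (w a : E) (s : ℝ) :
    ‖w - (a + s • v)‖ ^ 2 = ‖perp v (w - a)‖ ^ 2 + (⟪w - a, v⟫_ℝ - s) ^ 2 := by
  rw [sub_add_smul_eq_perp_add, norm_perp_add_smul_sq hv]

lemma norm_sub_add_smul_le (hv : ‖v‖ = 1) (w a : E) (s : ℝ) :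
    ‖w - (a + s • v)‖ ≤ ‖perp v (w - a)‖ + |⟪w - a, v⟫_ℝ - s| := by
  rw [sub_add_smul_eq_perp_add]
  refine (norm_add_le _ _).trans_eq ?_
  rw [norm_smul, hv, mul_one, Real.norm_eq_abs]

end Perp

lemma norm_map_sub_le {E F : Type*} [SeminormedAddCommGroup E] [SeminormedAddCommGroup F]
    [Module ℝ E] [Module ℝ F] (T : E →ₗ[ℝ] F) (x y z p : E) :
    ‖T (z - x)‖ ≤ ‖T (z - y)‖ + ‖T (p - y)‖ + ‖T (p - x)‖ := by
  have h : z - x = (z - y) - (p - y) + (p - x) := by abel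
  rw [h, map_add, map_sub]
  exact (norm_add_le _ _).trans (by gcongr; exact norm_sub_le _ _)

lemma exists_mem_Icc_abs_add_sub_le {τ t c L : ℝ} (hτ : τ ∈ Icc 0 L)
    (ht : |t| ≤ c + min τ (L - τ)) (hc : 0 ≤ c) : ∃ s ∈ Icc 0 L, |τ + t - s| ≤ c := by
  have h₁ : |t| ≤ c + τ := ht.trans (by gcongr; exact min_le_left _ _)
  have h₂ : |t| ≤ c + (L - τ) := ht.trans (by gcongr; exact min_le_right _ _)
  rcases lt_or_ge (τ + t) 0 with hlt | hge
  · exact ⟨0, ⟨le_rfl, hτ.1.trans hτ.2⟩, by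
      rw [sub_zero, abs_of_neg hlt]; linarith [neg_abs_le t]⟩
  rcases le_or_gt (τ + t) L with hle | hgt
  · exact ⟨τ + t, ⟨hge, hle⟩, by rwa [sub_self, abs_zero]⟩
  · exact ⟨L, ⟨hτ.1.trans hτ.2, le_rfl⟩, by
      rw [abs_of_pos (sub_pos.2 hgt)]; linarith [le_abs_self t]⟩

section Segment

variable {E : Type*} [NormedAddCommGroup E] [InnerProductSpace ℝ E] {a b v w : E} {L : ℝ}

lemma segment_eq_image_Icc (hdir : b - a = L • v) (hL : 0 ≤ L) :
    segment ℝ a b = (fun s : ℝ => a + s • v) '' Icc 0 L := by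
  have hf : (fun s : ℝ => a + s • v) = AffineMap.lineMap a (a + v) := by
    ext s; simp [AffineMap.lineMap_apply, add_comm]
  rw [hf, ← segment_eq_Icc hL, image_segment, AffineMap.lineMap_apply_zero, ← hf]
  beta_reduce
  rw [← hdir, add_sub_cancel]

lemma infDist_le_norm_perp_add (hv : ‖v‖ = 1) (hdir : b - a = L • v) (hL : 0 ≤ L) {s : ℝ}
    (hs : s ∈ Icc 0 L) (w : E) :
    infDist w (segment ℝ a b) ≤ ‖perp v (w - a)‖ + |⟪w - a, v⟫_ℝ - s| := by
  have hmem : a + s • v ∈ segment ℝ a b := by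
    rw [segment_eq_image_Icc hdir hL]; exact mem_image_of_mem _ hs
  calc infDist w (segment ℝ a b) ≤ dist w (a + s • v) := infDist_le_dist_of_mem hmem
    _ ≤ _ := by rw [dist_eq_norm]; exact norm_sub_add_smul_le hv w a s

lemma norm_perp_le_infDist (hv : ‖v‖ = 1) (hdir : b - a = L • v) (hL : 0 ≤ L) (w : E) :
    ‖perp v (w - a)‖ ≤ infDist w (segment ℝ a b) := by
  rw [le_infDist ⟨a, left_mem_segment ℝ a b⟩, segment_eq_image_Icc hdir hL]
  rintro _ ⟨s, -, rfl⟩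
  calc ‖perp v (w - a)‖ = ‖perp v (w - (a + s • v))‖ := by
        rw [sub_add_eq_sub_sub, map_sub (perp v) (w - a), perp_smul_self hv, sub_zero]
    _ ≤ dist w (a + s • v) := by rw [dist_eq_norm]; exact norm_perp_le hv _

lemma min_dist_le_infDist (hv : ‖v‖ = 1) (hdir : b - a = L • v) (hL : 0 ≤ L)
    (hτ : ⟪w - a, v⟫_ℝ ∉ Ioo 0 L) :
    min (dist w a) (dist w b) ≤ infDist w (segment ℝ a b) := by
  obtain rfl : b = a + L • v := by rw [← hdir, add_sub_cancel]
  rw [le_infDist ⟨a, left_mem_segment ℝ a _⟩, segment_eq_image_Icc hdir hL]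
  rintro _ ⟨s, hs, rfl⟩
  have key : ∀ s', (⟪w - a, v⟫_ℝ - s') ^ 2 ≤ (⟪w - a, v⟫_ℝ - s) ^ 2 →
      dist w (a + s' • v) ≤ dist w (a + s • v) := fun s' h => by
    rw [← sq_le_sq₀ dist_nonneg dist_nonneg, dist_eq_norm, dist_eq_norm,
      norm_sub_add_smul_sq hv, norm_sub_add_smul_sq hv]
    linarith
  rw [mem_Ioo, not_and_or, not_lt, not_lt] at hτ
  rcases hτ with hτ | hτ
  · refine (min_le_left _ _).trans ?_
    simpa using key 0 (by nlinarith [hs.1])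
  · exact (min_le_right _ _).trans (key L (by nlinarith [hs.2]))

lemma min_dist_le_norm_perp_add (hv : ‖v‖ = 1) (hdir : b - a = L • v)
    (hτ : ⟪w - a, v⟫_ℝ ∈ Icc 0 L) :
    min (dist w a) (dist w b) ≤ ‖perp v (w - a)‖ + min ⟪w - a, v⟫_ℝ (L - ⟪w - a, v⟫_ℝ) := by
  obtain rfl : b = a + L • v := by rw [← hdir, add_sub_cancel]
  rw [← min_add_add_left]
  apply min_le_min
  · simpa [dist_eq_norm, abs_of_nonneg hτ.1] using norm_sub_add_smul_le hv w a 0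
  · simpa [dist_eq_norm, abs_of_nonpos (sub_nonpos.2 hτ.2)] using norm_sub_add_smul_le hv w a L

end Segment

def cylRadius {E : Type*} [NormedAddCommGroup E] [NormedSpace ℝ E] (a b x : E) (r : ℝ) : ℝ :=
  max r (infDist x (segment ℝ a b))

def ballRadius {X : Type*} [PseudoMetricSpace X] (a b x : X) (r : ℝ) : ℝ :=
  max r (min (dist x a) (dist x b))

lemma infDist_le_cylRadius {E : Type*} [NormedAddCommGroup E] [NormedSpace ℝ E] {a b x : E}
    {r : ℝ} : infDist x (segment ℝ a b) ≤ cylRadius a b x r :=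
  le_max_right _ _

lemma cylRadius_nonneg {E : Type*} [NormedAddCommGroup E] [NormedSpace ℝ E] {a b x : E}
    {r : ℝ} : 0 ≤ cylRadius a b x r :=
  infDist_nonneg.trans infDist_le_cylRadius

section BallRadius

variable {X : Type*} [PseudoMetricSpace X] {a b x y : X} {r r' : ℝ}

lemma ballRadius_nonneg : 0 ≤ ballRadius a b x r :=
  (le_min dist_nonneg dist_nonneg).trans (le_max_right _ _)

lemma ballRadius_le_add_dist (hr : r' ≤ r + dist y x) :
    ballRadius a b y r' ≤ ballRadius a b x r + dist y x := by
  refine max_le (hr.trans (by gcongr; exact le_max_left _ _)) ?_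
  calc min (dist y a) (dist y b) ≤ min (dist x a) (dist x b) + dist y x := by
        rw [← min_add_add_right]
        exact min_le_min ((dist_triangle y x a).trans_eq (add_comm _ _))
          ((dist_triangle y x b).trans_eq (add_comm _ _))
    _ ≤ ballRadius a b x r + dist y x := by gcongr; exact le_max_right _ _

end BallRadius

section ScaledCapsule

variable {E : Type*} [NormedAddCommGroup E] [InnerProductSpace ℝ E]

/-- `C_s^μ(x, r)` for `s = [a, b]` with direction `v`, as cylinder ∩ ball: in the endpoint case
of `capsuleSeg` the two radii agree and the ball lies inside the cylinder. -/
def scaledCapsule (a b v x : E) (r μ : ℝ) : Set E :=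
  {p | ‖perp v (p - x)‖ ≤ μ * cylRadius a b x r ∧ ‖p - x‖ ≤ μ * ballRadius a b x r}

variable {a b v x y p : E} {L r r' μ : ℝ}

lemma infDist_le_of_mem_scaledCapsule (hv : ‖v‖ = 1) (hdir : b - a = L • v) (hL : 0 ≤ L)
    (hμ0 : 0 ≤ μ) (hμ1 : μ ≤ 1) (hp : p ∈ scaledCapsule a b v x r μ) :
    infDist p (segment ℝ a b) ≤ (1 + 2 * μ) * cylRadius a b x r := by
  have hR : 0 ≤ cylRadius a b x r := cylRadius_nonneg
  have hf : infDist x (segment ℝ a b) ≤ cylRadius a b x r := infDist_le_cylRadius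
  have hg : ‖perp v (x - a)‖ ≤ cylRadius a b x r := (norm_perp_le_infDist hv hdir hL x).trans hf
  by_cases hτ : ⟪x - a, v⟫_ℝ ∈ Icc 0 L
  · -- Move the foot of `x` along the axis by `⟪p - x, v⟫`, then clamp it to `[a, b]`.
    have hball : ‖p - x‖ ≤ μ * cylRadius a b x r + min ⟪x - a, v⟫_ℝ (L - ⟪x - a, v⟫_ℝ) := by
      have hB : ballRadius a b x r ≤ cylRadius a b x r + min ⟪x - a, v⟫_ℝ (L - ⟪x - a, v⟫_ℝ) :=
        max_le ((le_max_left _ _).trans (le_add_of_nonneg_right (le_min hτ.1 (sub_nonneg.2 hτ.2))))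
          ((min_dist_le_norm_perp_add hv hdir hτ).trans (by gcongr))
      nlinarith [hp.2, le_min hτ.1 (sub_nonneg.2 hτ.2)]
    obtain ⟨s, hs, hclamp⟩ := exists_mem_Icc_abs_add_sub_le hτ
      ((abs_inner_le_norm_of_norm_eq_one hv _).trans hball) (mul_nonneg hμ0 hR)
    have hperp : ‖perp v (p - a)‖ ≤ ‖perp v (p - x)‖ + ‖perp v (x - a)‖ := by
      rw [← sub_add_sub_cancel p x a, map_add]; exact norm_add_le _ _
    have hτp : ⟪p - a, v⟫_ℝ = ⟪x - a, v⟫_ℝ + ⟪p - x, v⟫_ℝ := by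
      rw [← inner_add_left, add_comm, sub_add_sub_cancel]
    calc infDist p (segment ℝ a b) ≤ ‖perp v (p - a)‖ + |⟪p - a, v⟫_ℝ - s| :=
          infDist_le_norm_perp_add hv hdir hL hs p
      _ ≤ μ * cylRadius a b x r + cylRadius a b x r + μ * cylRadius a b x r := by
          rw [hτp]
          linarith [hp.1]
      _ = (1 + 2 * μ) * cylRadius a b x r := by ring
  · have hB : ballRadius a b x r ≤ cylRadius a b x r :=
      max_le_max le_rfl (min_dist_le_infDist hv hdir hL (fun h => hτ (Ioo_subset_Icc_self h)))
    calc infDist p (segment ℝ a b) ≤ infDist x (segment ℝ a b) + dist p x :=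
          infDist_le_infDist_add_dist
      _ ≤ cylRadius a b x r + μ * cylRadius a b x r := by
          rw [dist_eq_norm]
          exact add_le_add hf (hp.2.trans (by gcongr))
      _ ≤ (1 + 2 * μ) * cylRadius a b x r := by nlinarith

lemma infDist_le_of_mem_scaledCapsule_inter (hv : ‖v‖ = 1) (hdir : b - a = L • v)
    (hL : 0 ≤ L) (hμ0 : 0 ≤ μ) (hμ1 : μ ≤ 1) (hpx : p ∈ scaledCapsule a b v x r μ)
    (hpy : p ∈ scaledCapsule a b v y r' μ) :
    infDist y (segment ℝ a b) ≤ (1 + 2 * μ) * cylRadius a b x r + μ * cylRadius a b y r' := by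
  by_cases hτ : ⟪y - a, v⟫_ℝ ∈ Icc 0 L
  · have hperp : perp v (y - a) = perp v (x - a) + perp v (p - x) - perp v (p - y) := by
      rw [← map_add, ← map_sub]; congr 1; abel
    have hR : 0 ≤ cylRadius a b x r := cylRadius_nonneg
    calc infDist y (segment ℝ a b) ≤ ‖perp v (y - a)‖ := by
          simpa using infDist_le_norm_perp_add hv hdir hL hτ y
      _ ≤ ‖perp v (x - a)‖ + ‖perp v (p - x)‖ + ‖perp v (p - y)‖ := by
          rw [hperp]; exact (norm_sub_le _ _).trans (by gcongr; exact norm_add_le _ _)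
      _ ≤ cylRadius a b x r + μ * cylRadius a b x r + μ * cylRadius a b y r' :=
          add_le_add (add_le_add ((norm_perp_le_infDist hv hdir hL x).trans
            infDist_le_cylRadius) hpx.1) hpy.1
      _ ≤ (1 + 2 * μ) * cylRadius a b x r + μ * cylRadius a b y r' := by nlinarith
  · have hB : ballRadius a b y r' ≤ cylRadius a b y r' :=
      max_le_max le_rfl (min_dist_le_infDist hv hdir hL (fun h => hτ (Ioo_subset_Icc_self h)))
    calc infDist y (segment ℝ a b) ≤ infDist p (segment ℝ a b) + dist y p :=
          infDist_le_infDist_add_dist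
      _ ≤ _ := add_le_add (infDist_le_of_mem_scaledCapsule hv hdir hL hμ0 hμ1 hpx)
          (by rw [dist_comm, dist_eq_norm]; exact hpy.2.trans (by gcongr))

lemma sub_mul_ballRadius_le (hr : r' ≤ r + dist y x) (hpx : p ∈ scaledCapsule a b v x r μ)
    (hpy : p ∈ scaledCapsule a b v y r' μ) :
    (1 - μ) * ballRadius a b y r' ≤ (1 + μ) * ballRadius a b x r := by
  have hyx : dist y x ≤ μ * ballRadius a b y r' + μ * ballRadius a b x r := by
    calc dist y x ≤ dist y p + dist p x := dist_triangle _ _ _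
      _ ≤ _ := by rw [dist_comm, dist_eq_norm, dist_eq_norm]; exact add_le_add hpy.2 hpx.2
  linarith [ballRadius_le_add_dist (a := a) (b := b) hr]

lemma homothety_inv_mem_scaledCapsule_one_iff (hμ : 0 < μ) (q : E) :
    AffineMap.homothety x μ⁻¹ q ∈ scaledCapsule a b v x r 1 ↔ q ∈ scaledCapsule a b v x r μ := by
  have h : AffineMap.homothety x μ⁻¹ q - x = μ⁻¹ • (q - x) := by
    simp [AffineMap.homothety_apply]
  simp only [scaledCapsule, mem_ofPred_eq, h, map_smul, norm_smul, Real.norm_eq_abs,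
    abs_inv, abs_of_pos hμ, one_mul, inv_mul_le_iff₀ hμ]

end ScaledCapsule

section Euclidean

variable {a b v x : EuclideanSpace ℝ (Fin d)} {r μ : ℝ}

lemma mem_scaleAbout_iff {q : EuclideanSpace ℝ (Fin d)} {C : Set (EuclideanSpace ℝ (Fin d))}
    (hμ : μ ≠ 0) : q ∈ scaleAbout x μ C ↔ AffineMap.homothety x μ⁻¹ q ∈ C := by
  constructor
  · rintro ⟨w, hw, rfl⟩
    rwa [← AffineMap.homothety_mul_apply, inv_mul_cancel₀ hμ, AffineMap.homothety_one]
  · exact fun h => ⟨_, h, by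
      rw [← AffineMap.homothety_mul_apply, mul_inv_cancel₀ hμ, AffineMap.homothety_one,
        AffineMap.id_apply]⟩

lemma capsuleSeg_eq_scaledCapsule_one (hv : ‖v‖ = 1) :
    capsuleSeg a b v x r = scaledCapsule a b v x r 1 := by
  unfold capsuleSeg
  split_ifs with h
  · ext w
    rw [mem_closedBall, dist_eq_norm]
    simp only [scaledCapsule, cylRadius, ballRadius, ← h, one_mul, mem_ofPred_eq]
    exact ⟨fun hw => ⟨(norm_perp_le hv _).trans hw, hw⟩, And.right⟩
  · ext w
    simp [scaledCapsule, cylRadius, ballRadius, perp_apply, dist_eq_norm]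

lemma scaleAbout_capsuleFam {a b v : Fin n → EuclideanSpace ℝ (Fin d)}
    (hv : ∀ i, ‖v i‖ = 1) (hμ : 0 < μ) :
    scaleAbout x μ (capsuleFam a b v x r) = ⋂ i, scaledCapsule (a i) (b i) (v i) x r μ := by
  ext q
  simp only [mem_scaleAbout_iff hμ.ne', capsuleFam, mem_iInter,
    capsuleSeg_eq_scaledCapsule_one (hv _), homothety_inv_mem_scaledCapsule_one_iff hμ]

end Euclidean

section LocalFeatureSize

variable {a b : Fin n → EuclideanSpace ℝ (Fin d)} {x y : EuclideanSpace ℝ (Fin d)}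

lemma lfs_le_max {i j : Fin n} (hij : i < j) (x : EuclideanSpace ℝ (Fin d)) :
    lfs a b x ≤ max (infDist x (segment ℝ (a i) (b i))) (infDist x (segment ℝ (a j) (b j))) :=
  csInf_le ⟨0, by rintro _ ⟨i', j', -, rfl⟩; exact infDist_nonneg.trans (le_max_left _ _)⟩
    ⟨i, j, hij, rfl⟩

lemma exists_lfs_eq (hn : 2 ≤ n) (x : EuclideanSpace ℝ (Fin d)) :
    ∃ i j : Fin n, i < j ∧
      lfs a b x = max (infDist x (segment ℝ (a i) (b i))) (infDist x (segment ℝ (a j) (b j))) := by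
  obtain ⟨i, j, hij, h⟩ : lfs a b x ∈ {t | ∃ i j : Fin n, i < j ∧
      t = max (infDist x (segment ℝ (a i) (b i))) (infDist x (segment ℝ (a j) (b j)))} :=
    Nonempty.csInf_mem ⟨_, ⟨0, by omega⟩, ⟨1, by omega⟩, Fin.mk_lt_mk.2 one_pos, rfl⟩
      ((finite_range fun ij : Fin n × Fin n => max (infDist x (segment ℝ (a ij.1) (b ij.1)))
        (infDist x (segment ℝ (a ij.2) (b ij.2)))).subset
          (by rintro _ ⟨i, j, -, rfl⟩; exact ⟨(i, j), rfl⟩))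
  exact ⟨i, j, hij, h⟩

lemma lfs_le_lfs_add_dist (hn : 2 ≤ n) : lfs a b y ≤ lfs a b x + dist y x := by
  obtain ⟨i, j, hij, hx⟩ := exists_lfs_eq (a := a) (b := b) hn x
  calc lfs a b y ≤ _ := lfs_le_max hij y
    _ ≤ max (infDist x (segment ℝ (a i) (b i)) + dist y x)
          (infDist x (segment ℝ (a j) (b j)) + dist y x) :=
        max_le_max infDist_le_infDist_add_dist infDist_le_infDist_add_dist
    _ = lfs a b x + dist y x := by rw [max_add_add_right, hx]

variable {μ c : ℝ}

lemma sub_mul_lfs_le (hn : 2 ≤ n) (hμ0 : 0 ≤ μ) (hμ1 : μ ≤ 1)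
    (h : ∀ i, infDist y (segment ℝ (a i) (b i)) ≤
      c * cylRadius (a i) (b i) x (lfs a b x) + μ * cylRadius (a i) (b i) y (lfs a b y)) :
    (1 - μ) * lfs a b y ≤ c * lfs a b x := by
  obtain ⟨i, j, hij, hx⟩ := exists_lfs_eq (a := a) (b := b) hn x
  set M := max (infDist y (segment ℝ (a i) (b i))) (infDist y (segment ℝ (a j) (b j)))
  have hyM : lfs a b y ≤ M := lfs_le_max hij y
  have hk : ∀ k, infDist x (segment ℝ (a k) (b k)) ≤ lfs a b x →
      infDist y (segment ℝ (a k) (b k)) ≤ M → infDist y (segment ℝ (a k) (b k)) ≤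
        c * lfs a b x + μ * M := fun k hkx hky =>
    (h k).trans (by
      rw [cylRadius, max_eq_left hkx]
      gcongr
      exact max_le hyM hky)
  have hM : M ≤ c * lfs a b x + μ * M :=
    max_le (hk i (hx ▸ le_max_left _ _) (le_max_left _ _))
      (hk j (hx ▸ le_max_right _ _) (le_max_right _ _))
  calc (1 - μ) * lfs a b y ≤ (1 - μ) * M := by gcongr
    _ ≤ c * lfs a b x := by linarith

lemma sub_mul_cylRadius_le (hn : 2 ≤ n) (hμ0 : 0 ≤ μ) (hμ1 : μ ≤ 1) (hc : 0 ≤ c)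
    (h : ∀ i, infDist y (segment ℝ (a i) (b i)) ≤
      c * cylRadius (a i) (b i) x (lfs a b x) + μ * cylRadius (a i) (b i) y (lfs a b y))
    (i : Fin n) :
    (1 - μ) * cylRadius (a i) (b i) y (lfs a b y) ≤ c * cylRadius (a i) (b i) x (lfs a b x) := by
  have hlfs := sub_mul_lfs_le hn hμ0 hμ1 h
  have hx : lfs a b x ≤ cylRadius (a i) (b i) x (lfs a b x) := le_max_left _ _
  rcases le_total (lfs a b y) (infDist y (segment ℝ (a i) (b i))) with hle | hle
  · have hi := h i
    unfold cylRadius at hi ⊢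
    rw [max_eq_right hle] at hi ⊢
    linarith
  · rw [cylRadius, max_eq_left hle]
    exact hlfs.trans (by gcongr)

end LocalFeatureSize

lemma le_expansion_mul {μ D Rx Ry : ℝ} (hμ0 : 0 < μ) (hμ1 : μ < 1) (hRx : 0 ≤ Rx)
    (hR : (1 - μ) * Ry ≤ (1 + 2 * μ) * Rx) (hD : D ≤ 2 * μ * Ry + μ * Rx) :
    D ≤ (3 + μ) * (1 + μ) / (1 - μ) ^ 2 * μ * Rx := by
  have h1 : 0 < 1 - μ := sub_pos.2 hμ1
  rw [div_mul_eq_mul_div, div_mul_eq_mul_div, le_div_iff₀ (by positivity)]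
  nlinarith [mul_le_mul_of_nonneg_right hD (sq_nonneg (1 - μ)),
    mul_le_mul_of_nonneg_left hR (by positivity : 0 ≤ 2 * μ * (1 - μ)),
    mul_nonneg (mul_nonneg hμ0.le hRx) (by positivity : 0 ≤ 4 * μ + 4 * μ ^ 2)]

end Capsule

open Capsule

theorem capsule_expansion_containment_lfs_general {d n : ℕ} (hn : 2 ≤ n)
    (a b v : Fin n → EuclideanSpace ℝ (Fin d))
    (hv : ∀ i, ‖v i‖ = 1)
    (hdir : ∀ i, b i - a i = ‖b i - a i‖ • v i)
    (lam : ℝ) (hlam0 : 0 < lam) (hlam1 : lam < 1)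
    (x y : EuclideanSpace ℝ (Fin d))
    (hmeet : (scaleAbout x lam (capsuleFam a b v x (lfs a b x)) ∩
        scaleAbout y lam (capsuleFam a b v y (lfs a b y))).Nonempty) :
    scaleAbout y lam (capsuleFam a b v y (lfs a b y)) ⊆
      scaleAbout x ((3 + lam) * (1 + lam) / (1 - lam) ^ 2 * lam)
        (capsuleFam a b v x (lfs a b x)) := by
  obtain ⟨p, hpx, hpy⟩ := hmeet
  rw [scaleAbout_capsuleFam hv hlam0, mem_iInter] at hpx hpy
  rw [scaleAbout_capsuleFam hv hlam0, scaleAbout_capsuleFam hv (by positivity)]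
  intro z hz
  rw [mem_iInter] at hz ⊢
  have hcyl := sub_mul_cylRadius_le hn hlam0.le hlam1.le (by positivity) fun i =>
    infDist_le_of_mem_scaledCapsule_inter (hv i) (hdir i) (norm_nonneg _) hlam0.le hlam1.le
      (hpx i) (hpy i)
  have hball i := sub_mul_ballRadius_le (lfs_le_lfs_add_dist hn) (hpx i) (hpy i)
  intro i
  refine ⟨le_expansion_mul hlam0 hlam1 cylRadius_nonneg (hcyl i) ?_,
    le_expansion_mul hlam0 hlam1 ballRadius_nonneg
    ((hball i).trans (mul_le_mul_of_nonneg_right (by linarith) ballRadius_nonneg)) ?_⟩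
  · linarith [norm_map_sub_le (perp (v i)) x y z p, (hz i).1, (hpy i).1, (hpx i).1]
  · linarith [norm_sub_le_norm_sub_add_norm_sub z p x, norm_sub_le_norm_sub_add_norm_sub z y p,
      norm_sub_rev y p, (hz i).2, (hpy i).2, (hpx i).2]

/-- **Expansion-Containment with local feature size.** If
`C^λ(x, φ(x))` and `C^λ(y, φ(y))` overlap, then
`C^λ(y, φ(y)) ⊆ C^{βλ}(x, φ(x))` with `β = (3+λ)(1+λ)/(1−λ)²`. -/
theorem capsule_expansion_containment_lfs {d n : ℕ} (hd : 1 ≤ d) (hn : 2 ≤ n)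
    (a b v : Fin n → EuclideanSpace ℝ (Fin d))
    (hab : ∀ i, a i ≠ b i)
    (hv : ∀ i, ‖v i‖ = 1)
    (hdir : ∀ i, b i - a i = ‖b i - a i‖ • v i)
    (hdisj : ∀ i j, i ≠ j → Disjoint (segment ℝ (a i) (b i)) (segment ℝ (a j) (b j)))
    (lam : ℝ) (hlam0 : 0 < lam) (hlam1 : lam < 1)
    (x y : EuclideanSpace ℝ (Fin d))
    (hmeet : (scaleAbout x lam (capsuleFam a b v x (lfs a b x)) ∩
        scaleAbout y lam (capsuleFam a b v y (lfs a b y))).Nonempty) :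
    scaleAbout y lam (capsuleFam a b v y (lfs a b y)) ⊆
      scaleAbout x ((3 + lam) * (1 + lam) / (1 - lam) ^ 2 * lam)
        (capsuleFam a b v x (lfs a b x)) :=
  capsule_expansion_containment_lfs_general hn a b v hv hdir lam hlam0 hlam1 x y hmeet
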